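/- Define h_1(a_1, a_2, a_3) = a_1^3 + a_2^3 − 2a_3^3 + 3a_1^2 − 6a_1·a_2 + 3a_1·a_3 + 3a_2^2 + 3a_2·a_3 − 6a_3^2 + 3a_1 + 3a_2 − 6a_3. If a_1, a_2, a_3 are real numbers with 0 ≤ a_1 ≤ a_2 ≤ a_3 < 1 and a_1 < a_3, then h_1(a_1, a_2, a_3) < 0. -/
import Mathlib


/-- The polynomial `h₁` controlling K-instability of polarizations of `ℙ²`-type on
the smooth del Pezzo surface of degree `6`. -/
noncomputable def h1 (a1 a2 a3 : ℝ) : ℝ :=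
  a1 ^ 3 + a2 ^ 3 - 2 * a3 ^ 3 + 3 * a1 ^ 2 - 6 * a1 * a2 + 3 * a1 * a3 + 3 * a2 ^ 2 +
    3 * a2 * a3 - 6 * a3 ^ 2 + 3 * a1 + 3 * a2 - 6 * a3

theorem h1_negative (a1 a2 a3 : ℝ)
    (h0 : 0 ≤ a1) (h12 : a1 ≤ a2) (h23 : a2 ≤ a3) (h3 : a3 < 1) (h13 : a1 < a3) :
    h1 a1 a2 a3 < 0 := by
  unfold h1
  have h2' : a2 < 1 := lt_of_le_of_lt h23 h3
  nlinarith [mul_nonneg (sub_nonneg.2 h13.le) (by nlinarith [sq_nonneg a1, sq_nonneg a3, sq_nonneg (a1 + a3)] : (0:ℝ) ≤ a1 ^ 2 + a1 * a3 + a3 ^ 2),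
    mul_nonneg (sub_nonneg.2 h23) (by nlinarith [sq_nonneg a2, sq_nonneg a3, sq_nonneg (a2 + a3)] : (0:ℝ) ≤ a2 ^ 2 + a2 * a3 + a3 ^ 2),
    mul_nonneg (h0.trans (h12.trans h23)) (sub_nonneg.2 h13.le),
    mul_nonneg (h0.trans (h12.trans h23)) (sub_nonneg.2 h23),
    mul_nonneg (sub_nonneg.2 h12) (by nlinarith : (0:ℝ) ≤ 1 - a2 + a1),
    mul_pos (sub_pos.2 h13) (sub_pos.2 h3),
    sub_nonneg.2 h23, sub_pos.2 h13]
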